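/- arXiv:2502.09959 — 8 statements merged into one kernel-verified Lean document; each statement's English description precedes it below -/
import Mathlib

section
/- Let Z be a Dedekind domain and S = {p_1,…,p_m} a finite set of nonzero prime ideals of Z. Then the set of principal ideals ⟨a⟩ generated by irreducible elements a ∈ Z whose support (set of prime ideals containing a) is contained in S is finite. -/
/-! Send a nonzero ideal with support in `S` to its exponent vector in `ℕ^S`. On ideals of this
kind the coordinatewise order of exponent vectors is divisibility, and two irreducible generators
one of whose ideals divides the other are associated, so the exponent vectors of the ideals in
question form an antichain. By Dickson's lemma, antichains in `ℕ^S` are finite. -/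

open UniqueFactorizationMonoid

theorem Set.finite_of_map_le_imp_eq {α β : Type*} [Preorder β] [WellQuasiOrderedLE β]
    {s : Set α} (f : α → β) (hf : ∀ x ∈ s, ∀ y ∈ s, f x ≤ f y → x = y) : s.Finite := by
  have hinj : s.InjOn f := fun x hx y hy hxy => hf x hx y hy hxy.le
  have hanti : IsAntichain (· ≤ ·) (f '' s) := by
    rintro - ⟨x, hx, rfl⟩ - ⟨y, hy, rfl⟩ hne hle
    exact hne (congrArg f (hf x hx y hy hle))
  exact (hanti.finite_of_partiallyWellOrderedOn (Set.isPWO_of_wellQuasiOrderedLE _)).of_finite_image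
    hinj

namespace UniqueFactorizationMonoid

variable {α : Type*} [CommMonoidWithZero α] [NormalizationMonoid α]
  [UniqueFactorizationMonoid α]

theorem dvd_of_count_normalizedFactors_le [DecidableEq α] {S : Finset α} {x y : α} (hx : x ≠ 0)
    (hy : y ≠ 0) (hxS : ∀ p ∈ normalizedFactors x, p ∈ S)
    (hle : ∀ p ∈ S, (normalizedFactors x).count p ≤ (normalizedFactors y).count p) : x ∣ y := by
  rw [dvd_iff_normalizedFactors_le_normalizedFactors hx hy, Multiset.le_iff_count]
  intro p
  by_cases hp : p ∈ S
  · exact hle p hp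
  · rw [Multiset.count_eq_zero_of_notMem fun h => hp (hxS p h)]
    exact Nat.zero_le _

theorem finite_of_dvd_imp_eq (S : Finset α) {s : Set α} (hs0 : ∀ x ∈ s, x ≠ 0)
    (hsS : ∀ x ∈ s, ∀ p ∈ normalizedFactors x, p ∈ S) (hs : ∀ x ∈ s, ∀ y ∈ s, x ∣ y → x = y) :
    s.Finite := by
  classical
  refine Set.finite_of_map_le_imp_eq (fun x (p : S) => (normalizedFactors x).count p.1) ?_
  intro x hx y hy hle
  exact hs x hx y hy <| dvd_of_count_normalizedFactors_le (hs0 x hx) (hs0 y hy) (hsS x hx)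
    fun p hp => hle ⟨p, hp⟩

end UniqueFactorizationMonoid

namespace Ideal

theorem mem_of_mem_normalizedFactors_span_singleton {R : Type*} [CommRing R] [IsDedekindDomain R]
    {S : Set (Ideal R)} {a : R} (ha : a ≠ 0)
    (hsupp : ∀ p : Ideal R, p.IsPrime → a ∈ p → p ∈ S) {q : Ideal R}
    (hq : q ∈ normalizedFactors (span {a})) : q ∈ S := by
  rw [mem_normalizedFactors_iff (by simpa using ha), span_singleton_le_iff_mem] at hq
  exact hsupp q hq.1 hq.2

theorem span_singleton_eq_of_dvd_of_irreducible {R : Type*} [CommRing R] [IsDomain R] {a b : R}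
    (ha : Irreducible a) (hb : Irreducible b) (h : span {a} ∣ span ({b} : Set R)) :
    span {a} = span ({b} : Set R) :=
  span_singleton_eq_span_singleton.mpr <|
    ha.associated_of_dvd hb (span_singleton_le_span_singleton.mp (le_of_dvd h))

end Ideal

theorem stmt_3_general {Z : Type*} [CommRing Z] [IsDedekindDomain Z]
    (S : Finset (Ideal Z)) :
    {I : Ideal Z | ∃ a : Z, Irreducible a ∧ I = Ideal.span {a} ∧
      ∀ p : Ideal Z, p.IsPrime → a ∈ p → p ∈ S}.Finite := by
  refine finite_of_dvd_imp_eq S ?_ ?_ ?_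
  · rintro - ⟨a, ha, rfl, -⟩
    simpa using ha.ne_zero
  · rintro - ⟨a, ha, rfl, hsupp⟩ q hq
    exact Ideal.mem_of_mem_normalizedFactors_span_singleton ha.ne_zero hsupp hq
  · rintro - ⟨a, ha, rfl, -⟩ - ⟨b, hb, rfl, -⟩ hdvd
    exact Ideal.span_singleton_eq_of_dvd_of_irreducible ha hb hdvd

theorem stmt_3 {Z : Type*} [CommRing Z] [IsDomain Z] [IsDedekindDomain Z]
    (S : Finset (Ideal Z)) (hS : ∀ p ∈ S, p.IsPrime ∧ p ≠ ⊥) :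
    {I : Ideal Z | ∃ a : Z, Irreducible a ∧ I = Ideal.span {a} ∧
      ∀ p : Ideal Z, p.IsPrime → a ∈ p → p ∈ S}.Finite :=
  stmt_3_general S
end

section
/- Let Z be a Dedekind domain, P ∈ Z[T_1,…,T_k,Y_1,…,Y_n] a nonzero polynomial. Then there exists a nonzero element φ ∈ Z such that P has no fixed divisor w.r.t. (T_1,…,T_k) among the proper nonzero principal ideals of the localization Z[1/φ]. -/
/-!
Over an infinite domain a nonzero polynomial does not vanish identically, so some
specialization `P(t, Y)` has a nonzero coefficient `φ`. In `Z[1/φ]` any common divisor of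
all coefficients of all specializations divides the unit `φ`. A finite domain is a field,
where every nonzero element is already a unit, so `φ = 1` works.
-/

open MvPolynomial

section Specialize

variable {R S σ τ : Type*} [CommRing R] [CommRing S] [Algebra R S]

theorem MvPolynomial.eval_aeval_sumElim (t : σ → R) (s : τ → R) (P : MvPolynomial (σ ⊕ τ) R) :
    eval s (aeval (Sum.elim (fun i => C (t i)) X) P) = eval (Sum.elim t s) P := by
  change aeval s (aeval _ P) = aeval (Sum.elim t s) P
  rw [comp_aeval_apply]
  congr 2
  funext i
  cases i <;> simp

theorem MvPolynomial.map_aeval_sumElim (t : σ → R) (P : MvPolynomial (σ ⊕ τ) R) :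
    aeval (Sum.elim (fun i => C (algebraMap R S (t i))) X) (map (algebraMap R S) P)
      = map (algebraMap R S) (aeval (Sum.elim (fun i => C (t i)) X) P) := by
  rw [aeval_map_algebraMap, map_aeval, aeval_def]
  congr 1
  · ext; simp
  · funext i
    cases i <;> simp

theorem MvPolynomial.exists_aeval_sumElim_ne_zero [IsDomain R] [Infinite R]
    {P : MvPolynomial (σ ⊕ τ) R} (hP : P ≠ 0) :
    ∃ t : σ → R, aeval (Sum.elim (fun i => C (t i)) X) P ≠ 0 := by
  by_contra! h
  refine hP (MvPolynomial.funext fun x => ?_)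
  rw [← Sum.elim_comp_inl_inr x, ← eval_aeval_sumElim, h, map_zero, map_zero]

end Specialize

theorem IsLocalization.isUnit_of_isField {R S : Type*} [CommRing R] [CommRing S] [Algebra R S]
    (hR : IsField R) (M : Submonoid R) [IsLocalization M S] {u : S} (hu : u ≠ 0) : IsUnit u := by
  obtain ⟨a, s, rfl⟩ := IsLocalization.exists_mk'_eq M u
  have ha : a ≠ 0 := by rintro rfl; simp at hu
  obtain ⟨b, hab⟩ := hR.mul_inv_cancel ha
  apply isUnit_of_mul_isUnit_left (y := algebraMap R S s)
  rw [IsLocalization.mk'_spec]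
  exact (IsUnit.of_mul_eq_one b hab).map _

theorem stmt_5_general {Z : Type*} [CommRing Z] [IsDomain Z] (k n : ℕ)
    (P : MvPolynomial (Fin k ⊕ Fin n) Z) (hP : P ≠ 0) :
    ∃ φ : Z, φ ≠ 0 ∧ ¬ ∃ u : Localization.Away φ, u ≠ 0 ∧ ¬ IsUnit u ∧
      ∀ (t : Fin k → Z) (m : Fin n →₀ ℕ),
        u ∣ coeff m (aeval
          (Sum.elim (fun i => C (algebraMap Z (Localization.Away φ) (t i))) X)
          (map (algebraMap Z (Localization.Away φ)) P)
          : MvPolynomial (Fin n) (Localization.Away φ)) := by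
  cases finite_or_infinite Z with
  | inl _ =>
    refine ⟨1, one_ne_zero, ?_⟩
    rintro ⟨u, hu0, hu, -⟩
    exact hu (IsLocalization.isUnit_of_isField (Finite.isField_of_domain Z) (.powers 1) hu0)
  | inr _ =>
    obtain ⟨t, ht⟩ := exists_aeval_sumElim_ne_zero hP
    obtain ⟨m, hm⟩ := ne_zero_iff.mp ht
    refine ⟨_, hm, ?_⟩
    rintro ⟨u, -, hu, hdvd⟩
    have hdvd_φ := hdvd t m
    rw [map_aeval_sumElim, coeff_map] at hdvd_φ
    exact hu (isUnit_of_dvd_unit hdvd_φ (IsLocalization.Away.algebraMap_isUnit _))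

theorem stmt_5 {Z : Type*} [CommRing Z] [IsDomain Z] [IsDedekindDomain Z] (k n : ℕ)
    (P : MvPolynomial (Fin k ⊕ Fin n) Z) (hP : P ≠ 0) :
    ∃ φ : Z, φ ≠ 0 ∧ ¬ ∃ u : Localization.Away φ, u ≠ 0 ∧ ¬ IsUnit u ∧
      ∀ (t : Fin k → Z) (m : Fin n →₀ ℕ),
        u ∣ coeff m (aeval
          (Sum.elim (fun i => C (algebraMap Z (Localization.Away φ) (t i))) X)
          (map (algebraMap Z (Localization.Away φ)) P)
          : MvPolynomial (Fin n) (Localization.Away φ)) :=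
  stmt_5_general k n P hP
end

section
/- Let Z be a Dedekind domain, P ∈ Z[T_1,…,T_k,Y_1,…,Y_n] a nonzero polynomial, S a finite set of nonzero proper ideals of Z, and for each ideal a ∈ S suppose given a tuple u_a ∈ Z^k with P(u_a, Y) ≢ 0 (mod a). Then there exists a single tuple v ∈ Z^k such that P(v, Y) ≢ 0 (mod a) for every a ∈ S. -/
open MvPolynomial

lemma aux_cong {Z : Type*} [CommRing Z] {k n : ℕ}
    (P : MvPolynomial (Fin k ⊕ Fin n) Z) (I : Ideal Z) (v w : Fin k → Z)
    (h : ∀ i, v i - w i ∈ I) (m : Fin n →₀ ℕ) :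
    coeff m (aeval (Sum.elim (fun i => C (v i)) X) P : MvPolynomial (Fin n) Z) -
      coeff m (aeval (Sum.elim (fun i => C (w i)) X) P : MvPolynomial (Fin n) Z) ∈ I := by
  have e1 : MvPolynomial.map (Ideal.Quotient.mk I)
        (aeval (Sum.elim (fun i => C (v i)) X) P : MvPolynomial (Fin n) Z) =
      MvPolynomial.map (Ideal.Quotient.mk I)
        (aeval (Sum.elim (fun i => C (w i)) X) P : MvPolynomial (Fin n) Z) := by
    have hfun : (fun s : Fin k ⊕ Fin n => MvPolynomial.map (Ideal.Quotient.mk I)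
          ((Sum.elim (fun i => C (v i)) X : Fin k ⊕ Fin n → MvPolynomial (Fin n) Z) s)) =
        (fun s : Fin k ⊕ Fin n => MvPolynomial.map (Ideal.Quotient.mk I)
          ((Sum.elim (fun i => C (w i)) X : Fin k ⊕ Fin n → MvPolynomial (Fin n) Z) s)) := by
      funext s
      cases s with
      | inl i =>
        simp only [Sum.elim_inl, MvPolynomial.map_C]
        exact congrArg C (Ideal.Quotient.eq.mpr (h i))
      | inr j => simp
    rw [map_aeval, map_aeval, hfun]
  have e2 := congrArg (coeff m) e1
  rw [coeff_map, coeff_map] at e2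
  exact Ideal.Quotient.eq.mp e2

theorem stmt_7 {Z : Type*} [CommRing Z] [IsDomain Z] [IsDedekindDomain Z] (k n : ℕ)
    (P : MvPolynomial (Fin k ⊕ Fin n) Z) (hP : P ≠ 0)
    (S : Finset (Ideal Z)) (hS : ∀ a ∈ S, a ≠ ⊥ ∧ a ≠ ⊤)
    (u : Ideal Z → (Fin k → Z))
    (hu : ∀ a ∈ S, ¬ ∀ m : Fin n →₀ ℕ,
      coeff m (aeval (Sum.elim (fun i => C (u a i)) X) P : MvPolynomial (Fin n) Z) ∈ a) :
    ∃ v : Fin k → Z, ∀ a ∈ S, ¬ ∀ m : Fin n →₀ ℕ,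
      coeff m (aeval (Sum.elim (fun i => C (v i)) X) P : MvPolynomial (Fin n) Z) ∈ a := by
  classical
  set Q : (Fin k → Z) → MvPolynomial (Fin n) Z :=
    fun w => aeval (Sum.elim (fun i => C (w i)) X) P with hQ
  -- Step 1: for each a ∈ S, a prime factor p of a and a monomial m witnessing
  -- non-vanishing mod p ^ (count of p in a)
  have h1 : ∀ a ∈ S, ∃ p : Ideal Z, ∃ m : Fin n →₀ ℕ,
      p ∈ (UniqueFactorizationMonoid.normalizedFactors a).toFinset ∧
      coeff m (Q (u a)) ∉
        p ^ (Multiset.count p (UniqueFactorizationMonoid.normalizedFactors a)) := by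
    intro a haS
    obtain ⟨m, hm⟩ := not_forall.mp (hu a haS)
    have ha0 : a ≠ 0 := (hS a haS).1
    have hprod : (∏ p ∈ (UniqueFactorizationMonoid.normalizedFactors a).toFinset,
        p ^ Multiset.count p (UniqueFactorizationMonoid.normalizedFactors a)) = a := by
      rw [← Finset.prod_multiset_count]
      exact associated_iff_eq.mp (UniqueFactorizationMonoid.prod_normalizedFactors ha0)
    have hinf : ((UniqueFactorizationMonoid.normalizedFactors a).toFinset.inf
        fun p => p ^ Multiset.count p (UniqueFactorizationMonoid.normalizedFactors a)) = a := by
      rw [IsDedekindDomain.inf_prime_pow_eq_prod _ _ _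
        (fun p hp => UniqueFactorizationMonoid.prime_of_normalized_factor p
          (Multiset.mem_toFinset.mp hp))
        (fun i _ j _ hij => hij)]
      exact hprod
    by_contra hcon
    push_neg at hcon
    apply hm
    have hmem : coeff m (Q (u a)) ∈ ((UniqueFactorizationMonoid.normalizedFactors a).toFinset.inf
        fun p => p ^ Multiset.count p (UniqueFactorizationMonoid.normalizedFactors a)) :=
      Submodule.mem_finsetInf.mpr fun p hp => hcon p m hp
    rwa [hinf] at hmem
  choose! p mw hp1 hp2 using h1
  -- the finite set of relevant primes
  set T : Finset (Ideal Z) := S.image p with hT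
  -- for each prime q ∈ T, the ideal in S achieving the minimal exponent at q
  have h2 : ∀ q ∈ T, ∃ a ∈ S.filter (fun a => p a = q),
      ∀ b ∈ S.filter (fun a => p a = q),
        Multiset.count q (UniqueFactorizationMonoid.normalizedFactors a) ≤
          Multiset.count q (UniqueFactorizationMonoid.normalizedFactors b) := by
    intro q hq
    obtain ⟨a, haS, rfl⟩ := Finset.mem_image.mp hq
    exact Finset.exists_min_image _ _ ⟨a, Finset.mem_filter.mpr ⟨haS, rfl⟩⟩
  choose! A hA1 hA2 using h2
  set E : Ideal Z → ℕ :=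
    fun q => Multiset.count q (UniqueFactorizationMonoid.normalizedFactors (A q)) with hE
  -- CRT: choose v componentwise
  have h3 : ∀ i : Fin k, ∃ y : Z, ∀ q ∈ T, y - u (A q) i ∈ q ^ E q := by
    intro i
    obtain ⟨y, hy⟩ := IsDedekindDomain.exists_forall_sub_mem_ideal (s := T)
      (fun q => q) E
      (fun q hq => by
        obtain ⟨a, haS, rfl⟩ := Finset.mem_image.mp hq
        exact UniqueFactorizationMonoid.prime_of_normalized_factor _
          (Multiset.mem_toFinset.mp (hp1 a haS)))
      (fun i _ j _ hij => hij)
      (fun q => u (A q) i)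
    exact ⟨y, fun q hq => hy q hq⟩
  choose v hv using h3
  refine ⟨v, fun a haS hall => ?_⟩
  -- the prime chosen for a
  set q : Ideal Z := p a with hq
  have hqT : q ∈ T := Finset.mem_image.mpr ⟨a, haS, rfl⟩
  have haF : a ∈ S.filter (fun a => p a = q) := Finset.mem_filter.mpr ⟨haS, rfl⟩
  have hAq : A q ∈ S.filter (fun a => p a = q) := hA1 q hqT
  obtain ⟨hAS, hpA⟩ := Finset.mem_filter.mp hAq
  -- minimality: E q ≤ count of q in a
  have hmin : E q ≤ Multiset.count q (UniqueFactorizationMonoid.normalizedFactors a) :=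
    hA2 q hqT a haF
  -- a ≤ q ^ E q
  have hle : a ≤ q ^ E q := by
    have hdvd : q ^ Multiset.count q (UniqueFactorizationMonoid.normalizedFactors a) ∣ a := by
      have h4 : Multiset.replicate
          (Multiset.count q (UniqueFactorizationMonoid.normalizedFactors a)) q ≤
          UniqueFactorizationMonoid.normalizedFactors a :=
        Multiset.le_count_iff_replicate_le.mp le_rfl
      have h5 := Multiset.prod_dvd_prod_of_le h4
      rw [Multiset.prod_replicate] at h5
      exact h5.trans (dvd_of_eq (associated_iff_eq.mp
        (UniqueFactorizationMonoid.prod_normalizedFactors (hS a haS).1)))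
    calc a ≤ q ^ Multiset.count q (UniqueFactorizationMonoid.normalizedFactors a) :=
            Ideal.le_of_dvd hdvd
      _ ≤ q ^ E q := Ideal.pow_le_pow_right hmin
  -- the witness monomial for A q is not killed mod q ^ E q
  have hnot : coeff (mw (A q)) (Q (u (A q))) ∉ q ^ E q := by
    have := hp2 (A q) hAS
    rwa [hpA] at this
  apply hnot
  have hc1 : coeff (mw (A q)) (Q v) ∈ q ^ E q := hle (hall (mw (A q)))
  have hc2 : coeff (mw (A q)) (Q v) - coeff (mw (A q)) (Q (u (A q))) ∈ q ^ E q :=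
    aux_cong P (q ^ E q) v (u (A q)) (fun i => hv i q hqT) (mw (A q))
  have := sub_mem hc1 hc2
  simpa using this
end

section
/- Let Z be an integral domain, p a prime element of Z, and P_1,…,P_s ∈ Z[T_1,…,T_k,Y_1,…,Y_n] polynomials whose product Π = P_1⋯P_s is not divisible by p. For each i, suppose 2^{ℓ_i + 1} > deg_{T_i}(Π) where ℓ_i + 1 is the number of monic monomials Y_1^{r_1}⋯Y_n^{r_n} with r_j ≤ d_{ij}. Then there exist polynomials M_1,…,M_k ∈ Z[Y] (each an Z-linear combination of those monomials) such that Π(M_1(Y),…,M_k(Y),Y) is not divisible by p. -/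
/-!
Reduce modulo `p`: over the domain `D = Z ⧸ (p)` the product `Π` is a nonzero polynomial in
`T₁, …, T_k` with coefficients in the domain `D[Y]`. Substituting for `Tᵢ` the `0/1`-sums of the
monomials `Y^r` with `r ≤ dᵢ` gives `2 ^ (ℓᵢ + 1)` distinct values, more than `deg_{Tᵢ} Π`, so by
the grid form of the Combinatorial Nullstellensatz one of these substitutions does not kill `Π`.
-/

open MvPolynomial Finset

theorem Finsupp.card_Iic_of_fintype {ι : Type*} [Fintype ι] [DecidableEq ι] (f : ι →₀ ℕ) :
    #(Iic f) = ∏ i, (f i + 1) := by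
  simp only [Finsupp.card_Iic, Nat.card_Iic]
  refine prod_subset (subset_univ f.support) fun i _ hi => ?_
  simp [Finsupp.notMem_support_iff.mp hi]

namespace MvPolynomial

section CommSemiring

variable {R σ τ : Type*} [CommSemiring R]

noncomputable def monomialSum (A : Finset (σ →₀ ℕ)) : MvPolynomial σ R :=
  ∑ m ∈ A, monomial m 1

theorem coeff_monomialSum [DecidableEq σ] (A : Finset (σ →₀ ℕ)) (m : σ →₀ ℕ) :
    coeff m (monomialSum A : MvPolynomial σ R) = if m ∈ A then 1 else 0 := by
  simp only [monomialSum, coeff_sum, coeff_monomial, sum_ite_eq']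

theorem support_monomialSum_subset (A : Finset (σ →₀ ℕ)) :
    (monomialSum A : MvPolynomial σ R).support ⊆ A := by
  classical
  intro m hm
  by_contra h
  simp [mem_support_iff, coeff_monomialSum, h] at hm

theorem monomialSum_injective [Nontrivial R] :
    Function.Injective (monomialSum : Finset (σ →₀ ℕ) → MvPolynomial σ R) := by
  classical
  intro A B h
  ext m
  have hm := congrArg (coeff m) h
  simp only [coeff_monomialSum] at hm
  split_ifs at hm <;> simp_all

theorem map_monomialSum {S : Type*} [CommSemiring S] (g : R →+* S) (A : Finset (σ →₀ ℕ)) :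
    map g (monomialSum A) = monomialSum A := by
  simp [monomialSum]

theorem coeff_coeff_sumAlgEquiv (f : MvPolynomial (σ ⊕ τ) R) (a : σ →₀ ℕ) (b : τ →₀ ℕ) :
    coeff b (coeff a (sumAlgEquiv R σ τ f)) = coeff (Finsupp.sumElim a b) f := by
  simp [sumAlgEquiv, coeff, AddMonoidAlgebra.curryAlgEquiv, AddMonoidAlgebra.curryRingEquiv,
    AddMonoidAlgebra.curryAddEquiv]

theorem degreeOf_sumAlgEquiv_le (f : MvPolynomial (σ ⊕ τ) R) (i : σ) :
    degreeOf i (sumAlgEquiv R σ τ f) ≤ degreeOf (Sum.inl i) f := by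
  refine degreeOf_le_iff.mpr fun a ha => ?_
  obtain ⟨b, hb⟩ := ne_zero_iff.mp (mem_support_iff.mp ha)
  rw [coeff_coeff_sumAlgEquiv] at hb
  simpa using monomial_le_degreeOf (Sum.inl i) (mem_support_iff.mpr hb)

theorem eval_sumAlgEquiv (x : σ → MvPolynomial τ R) (f : MvPolynomial (σ ⊕ τ) R) :
    eval x (sumAlgEquiv R σ τ f) = aeval (Sum.elim x X) f := by
  rw [← coe_aeval_eq_eval]
  change ((aeval x).restrictScalars R).comp (sumAlgEquiv R σ τ).toAlgHom f = _
  congr 1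
  ext (i | i) <;> simp

theorem degreeOf_map_le {S : Type*} [CommSemiring S] (g : R →+* S) (f : MvPolynomial σ R)
    (i : σ) : degreeOf i (map g f) ≤ degreeOf i f := by
  classical
  simpa only [degreeOf_def] using Multiset.count_le_of_le i degrees_map_le

theorem map_aeval_sumElim_X {S : Type*} [CommSemiring S] (g : R →+* S)
    (M : σ → MvPolynomial τ R) (f : MvPolynomial (σ ⊕ τ) R) :
    map g (aeval (Sum.elim M X) f) = aeval (Sum.elim (fun i => map g (M i)) X) (map g f) := by
  rw [aeval_eq_bind₁, aeval_eq_bind₁, map_bind₁]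
  congr 2
  funext i
  cases i <;> simp

end CommSemiring

section CommRing

variable {R σ τ : Type*} [CommRing R]

theorem map_mk_span_singleton_eq_zero_iff (p : R) (f : MvPolynomial σ R) :
    map (Ideal.Quotient.mk (Ideal.span {p})) f = 0 ↔ ∀ m, p ∣ coeff m f := by
  simp [MvPolynomial.ext_iff, coeff_map, Ideal.Quotient.eq_zero_iff_dvd]

variable [IsDomain R] [Finite σ]

theorem exists_eval_ne_zero_of_degreeOf_lt {F : MvPolynomial σ R} (hF : F ≠ 0)
    (S : σ → Finset R) (hS : ∀ i, degreeOf i F < #(S i)) :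
    ∃ x, (∀ i, x i ∈ S i) ∧ eval x F ≠ 0 := by
  by_contra! h
  exact hF (eq_zero_of_eval_zero_at_prod_finset F S hS h)

theorem exists_aeval_monomialSum_ne_zero {f : MvPolynomial (σ ⊕ τ) R} (hf : f ≠ 0)
    (B : σ → Finset (τ →₀ ℕ)) (hB : ∀ i, degreeOf (Sum.inl i) f < 2 ^ #(B i)) :
    ∃ A : σ → Finset (τ →₀ ℕ), (∀ i, A i ⊆ B i) ∧
      aeval (Sum.elim (fun i => (monomialSum (A i) : MvPolynomial τ R)) X) f ≠ 0 := by
  classical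
  let S : σ → Finset (MvPolynomial τ R) := fun i => (B i).powerset.image monomialSum
  have hS : ∀ i, degreeOf i (sumAlgEquiv R σ τ f) < #(S i) := fun i => by
    rw [card_image_of_injective _ monomialSum_injective, card_powerset]
    exact (degreeOf_sumAlgEquiv_le f i).trans_lt (hB i)
  obtain ⟨x, hxS, hx⟩ := exists_eval_ne_zero_of_degreeOf_lt
    ((map_ne_zero_iff _ (sumAlgEquiv R σ τ).injective).mpr hf) S hS
  choose A hAB hAx using fun i => mem_image.mp (hxS i)
  refine ⟨A, fun i => mem_powerset.mp (hAB i), ?_⟩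
  rwa [← eval_sumAlgEquiv, _root_.funext hAx]

end CommRing

end MvPolynomial

theorem stmt_9_general {Z : Type*} [CommRing Z] (p : Z) (hp : Prime p)
    (k n s : ℕ) (P : Fin s → MvPolynomial (Fin k ⊕ Fin n) Z)
    (d : Fin k → Fin n → ℕ)
    (hdiv : ¬ ∀ m, p ∣ coeff m (∏ i, P i))
    (hdeg : ∀ i : Fin k, degreeOf (Sum.inl i) (∏ j, P j) < 2 ^ (∏ j, (d i j + 1))) :
    ∃ M : Fin k → MvPolynomial (Fin n) Z,
      (∀ i, ∀ m ∈ (M i).support, ∀ j, m j ≤ d i j) ∧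
      ¬ ∀ m : Fin n →₀ ℕ,
        p ∣ coeff m (aeval (Sum.elim M X) (∏ i, P i) : MvPolynomial (Fin n) Z) := by
  classical
  have : (Ideal.span {p}).IsPrime := (Ideal.span_singleton_prime hp.ne_zero).mpr hp
  let π := Ideal.Quotient.mk (Ideal.span {p})
  have hprod : map π (∏ i, P i) ≠ 0 := mt (map_mk_span_singleton_eq_zero_iff p _).mp hdiv
  let B i : Finset (Fin n →₀ ℕ) := Iic (Finsupp.equivFunOnFinite.symm (d i))
  obtain ⟨A, hAB, hA⟩ := exists_aeval_monomialSum_ne_zero hprod B fun i => by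
    rw [Finsupp.card_Iic_of_fintype]
    exact (degreeOf_map_le _ _ _).trans_lt (hdeg i)
  refine ⟨fun i => monomialSum (A i), fun i m hm j => ?_, fun h => hA ?_⟩
  · exact mem_Iic.mp (hAB i (support_monomialSum_subset _ hm)) j
  · rw [← (map_mk_span_singleton_eq_zero_iff p _).mpr h, map_aeval_sumElim_X]
    simp only [map_monomialSum]
    rfl

theorem stmt_9 {Z : Type*} [CommRing Z] [IsDomain Z] (p : Z) (hp : Prime p)
    (k n s : ℕ) (P : Fin s → MvPolynomial (Fin k ⊕ Fin n) Z)
    (d : Fin k → Fin n → ℕ)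
    (hdiv : ¬ ∀ m, p ∣ coeff m (∏ i, P i))
    (hdeg : ∀ i : Fin k, degreeOf (Sum.inl i) (∏ j, P j) < 2 ^ (∏ j, (d i j + 1))) :
    ∃ M : Fin k → MvPolynomial (Fin n) Z,
      (∀ i, ∀ m ∈ (M i).support, ∀ j, m j ≤ d i j) ∧
      ¬ ∀ m : Fin n →₀ ℕ,
        p ∣ coeff m (aeval (Sum.elim M X) (∏ i, P i) : MvPolynomial (Fin n) Z) :=
  stmt_9_general p hp k n s P d hdiv hdeg
end

section
/- Let R be a commutative ring and let Q_0,…,Q_ℓ ∈ R[Y_1,…,Y_n] be monomials that are pairwise distinct (as monomials). Then the product of all differences Q_i − Q_j (i ≠ j) is not a zero divisor in R[Y_1,…,Y_n]. Consequently, a nonzero polynomial F(T) of degree ≤ ℓ in one variable T with coefficients in R[Y_1,…,Y_n] cannot vanish at all of the ℓ+1 elements Q_0,…,Q_ℓ. -/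
/-!
With respect to any monomial order, `X^a - X^b` with `a ≠ b` has leading coefficient `±1`, a unit,
so it is a non-zero-divisor; hence so is any product of such differences. The Vandermonde
determinant of the `Q_i` is such a product, so the linear system expressing `F(Q_i) = 0` in the
coefficients of `F` has only the trivial solution.
-/

open MvPolynomial
open scoped nonZeroDivisors Matrix

theorem MonomialOrder.monomial_one_sub_monomial_one_mem_nonZeroDivisors {σ R : Type*} [CommRing R]
    (m : MonomialOrder σ) {a b : σ →₀ ℕ} (hab : a ≠ b) :
    (monomial a 1 - monomial b 1 : MvPolynomial σ R) ∈ (MvPolynomial σ R)⁰ := by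
  nontriviality R
  classical
  refine mem_nonZeroDivisors_of_leadingCoeff_mem_nonZeroDivisors (m := m)
    (IsUnit.mem_nonZeroDivisors ?_)
  rcases lt_or_gt_of_ne (m.toSyn.injective.ne hab) with h | h
  · rw [← neg_sub, leadingCoeff_neg, m.leadingCoeff_sub_of_lt] <;> simp [degree_monomial, h]
  · rw [m.leadingCoeff_sub_of_lt] <;> simp [degree_monomial, h]

theorem MvPolynomial.monomial_one_sub_monomial_one_mem_nonZeroDivisors {σ R : Type*}
    [CommRing R] {a b : σ →₀ ℕ} (hab : a ≠ b) :
    (monomial a 1 - monomial b 1 : MvPolynomial σ R) ∈ (MvPolynomial σ R)⁰ := by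
  -- a well-order on `σ` makes the lexicographic order on `σᵒᵈ` a monomial order
  let _ : LinearOrder σ := IsWellOrder.linearOrder WellOrderingRel
  have : WellFoundedLT σ := ⟨WellOrderingRel.isWellOrder.wf⟩
  exact (MonomialOrder.lex (σ := σᵒᵈ)).monomial_one_sub_monomial_one_mem_nonZeroDivisors hab

theorem Matrix.det_vandermonde_mem_nonZeroDivisors {S : Type*} [CommRing S] {k : ℕ}
    {v : Fin k → S} (hv : Pairwise fun i j => v i - v j ∈ S⁰) :
    (vandermonde v).det ∈ S⁰ := by
  rw [det_vandermonde]
  exact prod_mem fun i _ => prod_mem fun j hj => hv (Finset.mem_Ioi.mp hj).ne'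

theorem Matrix.vandermonde_mulVec_coeff {S : Type*} [CommRing S] {k : ℕ} (v : Fin k → S)
    {F : Polynomial S} (hdeg : F.natDegree < k) :
    vandermonde v *ᵥ (fun j : Fin k => F.coeff j) = fun i => F.eval (v i) := by
  funext i
  rw [Polynomial.eval_eq_sum_range' hdeg, ← Fin.sum_univ_eq_sum_range]
  simp only [mulVec, dotProduct, vandermonde_apply, mul_comm]

theorem Polynomial.eq_zero_of_natDegree_lt_of_eval_eq_zero {S : Type*} [CommRing S] {k : ℕ}
    {v : Fin k → S} (hv : Pairwise fun i j => v i - v j ∈ S⁰) {F : Polynomial S}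
    (hdeg : F.natDegree < k) (heval : ∀ i, F.eval (v i) = 0) : F = 0 := by
  have hcoeff : (fun j : Fin k => F.coeff j) = 0 :=
    (Matrix.Nondegenerate.of_det_mem_nonZeroDivisors
      (Matrix.det_vandermonde_mem_nonZeroDivisors hv)).separatingRight.eq_zero_of_mulVec_eq_zero
      (by rw [Matrix.vandermonde_mulVec_coeff v hdeg]; exact _root_.funext heval)
  ext j
  rcases lt_or_ge j k with hj | hj
  · exact congrFun hcoeff ⟨j, hj⟩
  · exact coeff_eq_zero_of_natDegree_lt (hdeg.trans_le hj)

theorem stmt_10 {R : Type*} [CommRing R] (n ℓ : ℕ)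
    (m : Fin (ℓ + 1) → (Fin n →₀ ℕ)) (hm : Function.Injective m) :
    (∏ q ∈ Finset.univ.filter (fun q : Fin (ℓ + 1) × Fin (ℓ + 1) => q.1 ≠ q.2),
        ((monomial (m q.1) 1 : MvPolynomial (Fin n) R) - monomial (m q.2) 1))
      ∈ nonZeroDivisors (MvPolynomial (Fin n) R) ∧
    ∀ F : Polynomial (MvPolynomial (Fin n) R), F ≠ 0 → F.natDegree ≤ ℓ →
      ∃ i : Fin (ℓ + 1),
        Polynomial.eval (monomial (m i) 1 : MvPolynomial (Fin n) R) F ≠ 0 := by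
  have hdiff : Pairwise fun i j =>
      (monomial (m i) 1 - monomial (m j) 1 : MvPolynomial (Fin n) R) ∈ (MvPolynomial (Fin n) R)⁰ :=
    fun i j hij => monomial_one_sub_monomial_one_mem_nonZeroDivisors (hm.ne hij)
  refine ⟨prod_mem fun q hq => hdiff (Finset.mem_filter.mp hq).2, fun F hF hdeg => ?_⟩
  by_contra! hvanish
  exact hF (Polynomial.eq_zero_of_natDegree_lt_of_eval_eq_zero hdiff (Nat.lt_succ_of_le hdeg)
    hvanish)
end

section
/- Let Z be an integral domain, p ∈ Z a nonzero nonunit, and P ∈ Z[T, Y_1,…,Y_n] written as P = Σ_{i=0}^{r} Z_i(Y) T^i with Z_r ≠ 0. Let d_1,…,d_n ≥ 0 with Σ_j d_j > deg_Y(P). If P(Y_1^{d_1}⋯Y_n^{d_n}, Y_1,…,Y_n) ≡ 0 (mod p), then Z_i(Y) ≡ 0 (mod p) for all i, i.e., p divides P. -/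
/-!
Substituting `T ↦ Y^D` sends the monomial `Y^m T^i` of `P` to `Y^(m + i•D)`. Since every
`Y`-degree occurring in `P` is smaller than `|D|`, the exponent `m + i•D` determines both `i`
(the quotient of its degree by `|D|`) and `m`, so the coefficients of `P(Y^D, Y)` are exactly
the coefficients of the `Z_i`, and `p` divides all of them.
-/

open MvPolynomial

namespace MvPolynomial

variable {σ R : Type*} [CommSemiring R]

lemma coeff_add_nsmul_mul_monomial_nsmul_eq_zero {f : MvPolynomial σ R} {D m : σ →₀ ℕ}
    (hf : f.totalDegree < D.degree) (hm : m.degree < D.degree) {i k : ℕ} (hki : k ≠ i) :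
    coeff (m + i • D) (f * monomial (k • D) 1) = 0 := by
  rw [coeff_mul_monomial']
  split_ifs with hle
  · have hsplit := congrArg Finsupp.degree (tsub_add_cancel_of_le hle)
    simp only [map_add, map_nsmul, smul_eq_mul] at hsplit
    rw [coeff_eq_zero_of_totalDegree_lt (d := m + i • D - k • D), zero_mul]
    change f.totalDegree < (m + i • D - k • D).degree
    -- For `k < i` the remaining exponent has degree `≥ |D|`; for `k > i`, `k • D ≤ m + i • D`
    -- would force `|m| ≥ |D|`.
    rcases Nat.lt_or_gt_of_ne hki with hki | hki
    · have : k * D.degree + D.degree ≤ i * D.degree := by nlinarith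
      omega
    · nlinarith
  · rfl

theorem coeff_add_nsmul_eval_monomial (P : Polynomial (MvPolynomial σ R)) {D m : σ →₀ ℕ}
    (hP : ∀ k, (P.coeff k).totalDegree < D.degree) (hm : m.degree < D.degree) (i : ℕ) :
    coeff (m + i • D) (P.eval (monomial D 1)) = coeff m (P.coeff i) := by
  have hterm : ∀ k, coeff (m + i • D) (P.coeff k * monomial D 1 ^ k) =
      if k = i then coeff m (P.coeff i) else 0 := by
    intro k
    rw [monomial_pow, one_pow]
    split_ifs with hki
    · rw [hki, coeff_mul_monomial', if_pos le_add_self, add_tsub_cancel_right, mul_one]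
    · exact coeff_add_nsmul_mul_monomial_nsmul_eq_zero (hP k) hm hki
  rw [Polynomial.eval_eq_sum, Polynomial.sum_def, coeff_sum,
    Finset.sum_congr rfl fun k _ => hterm k, Finset.sum_ite_eq']
  split_ifs with hi
  · rfl
  · rw [Polynomial.notMem_support_iff.1 hi, coeff_zero]

end MvPolynomial

theorem stmt_11_general {Z : Type*} [CommRing Z] (p : Z) (n : ℕ) (P : Polynomial (MvPolynomial (Fin n) Z))
    (d : Fin n → ℕ)
    (hdeg : ∀ i, (P.coeff i).totalDegree < ∑ j, d j)
    (hdvd : ∀ m : Fin n →₀ ℕ, p ∣ coeff m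
      (Polynomial.eval
        (monomial (Finsupp.equivFunOnFinite.symm d) 1 : MvPolynomial (Fin n) Z) P)) :
    ∀ i, ∀ m : Fin n →₀ ℕ, p ∣ coeff m (P.coeff i) := by
  intro i m
  set D : Fin n →₀ ℕ := Finsupp.equivFunOnFinite.symm d
  have hD : D.degree = ∑ j, d j := Finsupp.degree_eq_sum D
  by_cases hm : m.degree < D.degree
  · rw [← coeff_add_nsmul_eval_monomial P (hD ▸ hdeg) hm i]
    exact hdvd _
  · rw [coeff_eq_zero_of_totalDegree_lt ((hdeg i).trans_le (hD ▸ not_lt.1 hm))]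
    exact dvd_zero p

theorem stmt_11 {Z : Type*} [CommRing Z] [IsDomain Z] (p : Z) (hp : p ≠ 0)
    (hpu : ¬ IsUnit p) (n : ℕ) (P : Polynomial (MvPolynomial (Fin n) Z))
    (d : Fin n → ℕ)
    (hdeg : ∀ i, (P.coeff i).totalDegree < ∑ j, d j)
    (hdvd : ∀ m : Fin n →₀ ℕ, p ∣ coeff m
      (Polynomial.eval
        (monomial (Finsupp.equivFunOnFinite.symm d) 1 : MvPolynomial (Fin n) Z) P)) :
    ∀ i, ∀ m : Fin n →₀ ℕ, p ∣ coeff m (P.coeff i) :=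
  stmt_11_general p n P d hdeg hdvd
end

section
/- For every integer d ≥ 0 there exists an irreducible polynomial P ∈ ℤ[T,Y] with deg_T(P) = 2^{d+1} such that for every polynomial M ∈ ℤ[Y] of degree ≤ d, the polynomial P(M(Y), Y) is divisible by 2 in ℤ[Y] (hence reducible in ℤ[Y]). -/
/-!
Let `P₀ = ∏ (T - p(Y))` over the `2^(d+1)` polynomials `p` of degree `≤ d` with coefficients in
`{0, 1}`. Every `M ∈ ℤ[Y]` of degree `≤ d` is congruent mod 2 to one of these `p`, so the factor
`M - p` makes `P₀(M)` even. The polynomial `P = 3 P₀ - 2 T^(2^(d+1)) + 6` is congruent to `P₀`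
mod 2, is monic, and is Eisenstein at the prime `3 ∈ ℤ[Y]` because `P₀` has constant term `0`
(the factor `p = 0` contributes `T`); hence `P` is irreducible in `ℤ[Y][T]`.
-/

open Polynomial

section EisensteinTwist

variable {R : Type*} [CommRing R]

noncomputable def eisensteinTwist (p c : R) (Q : R[X]) : R[X] :=
  C p * Q - C (p - 1) * X ^ Q.natDegree + C c

theorem eisensteinTwist_eq_add (p c : R) (Q : R[X]) :
    eisensteinTwist p c Q = Q + (C (p - 1) * (Q - X ^ Q.natDegree) + C c) := by
  rw [eisensteinTwist, C_sub, C_1]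
  ring

theorem degree_C_mul_sub_X_pow_add_C_lt [Nontrivial R] {Q : R[X]} (hQ : Q.Monic)
    (hn : 0 < Q.natDegree) (a c : R) :
    (C a * (Q - X ^ Q.natDegree) + C c).degree < Q.degree := by
  rw [degree_eq_natDegree hQ.ne_zero, degree_lt_iff_coeff_zero]
  intro k hk
  replace hk : Q.natDegree ≤ k := by exact_mod_cast hk
  have hk0 : k ≠ 0 := (hn.trans_le hk).ne'
  rcases hk.eq_or_lt with hk | hk
  · simp [coeff_C, ← hk, hn.ne', hQ.coeff_natDegree]
  · simp [coeff_C, coeff_X_pow, coeff_eq_zero_of_natDegree_lt hk, hk.ne', hk0]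

theorem monic_eisensteinTwist [Nontrivial R] {Q : R[X]} (hQ : Q.Monic) (hn : 0 < Q.natDegree)
    (p c : R) : (eisensteinTwist p c Q).Monic := by
  rw [eisensteinTwist_eq_add]
  exact hQ.add_of_left (degree_C_mul_sub_X_pow_add_C_lt hQ hn _ _)

theorem natDegree_eisensteinTwist [Nontrivial R] {Q : R[X]} (hQ : Q.Monic) (hn : 0 < Q.natDegree)
    (p c : R) : (eisensteinTwist p c Q).natDegree = Q.natDegree := by
  rw [eisensteinTwist_eq_add]
  exact natDegree_add_eq_left_of_degree_lt (degree_C_mul_sub_X_pow_add_C_lt hQ hn _ _)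

theorem coeff_eisensteinTwist_of_lt (p c : R) {Q : R[X]} {k : ℕ} (hk : k < Q.natDegree) :
    (eisensteinTwist p c Q).coeff k = p * Q.coeff k + if k = 0 then c else 0 := by
  simp only [eisensteinTwist, coeff_add, coeff_sub, coeff_C_mul, coeff_X_pow, coeff_C, if_neg hk.ne,
    mul_zero, sub_zero]

theorem isEisensteinAt_eisensteinTwist [Nontrivial R] {p c : R} {Q : R[X]} (hp : Prime p)
    (hQ : Q.Monic) (hn : 0 < Q.natDegree) (hQ0 : Q.coeff 0 = 0) (hc : p ∣ c)
    (hc2 : ¬ p ^ 2 ∣ c) : (eisensteinTwist p c Q).IsEisensteinAt (Ideal.span {p}) where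
  leading := by
    rw [(monic_eisensteinTwist hQ hn p c).leadingCoeff, Ideal.mem_span_singleton]
    exact fun h => hp.not_isUnit (isUnit_of_dvd_one h)
  mem {k} hk := by
    rw [natDegree_eisensteinTwist hQ hn] at hk
    rw [coeff_eisensteinTwist_of_lt p c hk, Ideal.mem_span_singleton]
    exact dvd_add (dvd_mul_right p _) (by split_ifs <;> simp [hc])
  notMem := by
    rwa [coeff_eisensteinTwist_of_lt p c hn, hQ0, Ideal.span_singleton_pow,
      Ideal.mem_span_singleton, mul_zero, zero_add, if_pos rfl]

theorem irreducible_eisensteinTwist [IsDomain R] {p c : R} {Q : R[X]} (hp : Prime p)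
    (hQ : Q.Monic) (hn : 0 < Q.natDegree) (hQ0 : Q.coeff 0 = 0) (hc : p ∣ c)
    (hc2 : ¬ p ^ 2 ∣ c) : Irreducible (eisensteinTwist p c Q) :=
  (isEisensteinAt_eisensteinTwist hp hQ hn hQ0 hc hc2).irreducible
    ((Ideal.span_singleton_prime hp.ne_zero).mpr hp) (monic_eisensteinTwist hQ hn p c).isPrimitive
    (by rwa [natDegree_eisensteinTwist hQ hn])

theorem dvd_eval_eisensteinTwist {p c a : R} {Q : R[X]} {x : R} (hp : a ∣ p - 1) (hc : a ∣ c)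
    (hQx : a ∣ Q.eval x) : a ∣ (eisensteinTwist p c Q).eval x := by
  rw [eisensteinTwist_eq_add, eval_add, eval_add, eval_mul, eval_C, eval_C]
  exact dvd_add hQx (dvd_add (dvd_mul_of_dvd_left hp _) hc)

end EisensteinTwist

section DigitPolynomials

variable {n m : ℕ}

noncomputable def digitPoly (f : Fin n → Fin m) : ℤ[X] :=
  ∑ i, C (f i : ℤ) * X ^ (i : ℕ)

theorem coeff_digitPoly (f : Fin n → Fin m) (j : ℕ) :
    (digitPoly f).coeff j = if h : j < n then (f ⟨j, h⟩ : ℤ) else 0 := by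
  simp only [digitPoly, finsetSum_coeff, coeff_C_mul, coeff_X_pow]
  split_ifs with h
  · rw [Finset.sum_eq_single_of_mem ⟨j, h⟩ (Finset.mem_univ _)]
    · simp
    · intro i _ hi
      rw [if_neg fun h => hi (Fin.ext h.symm), mul_zero]
  · exact Finset.sum_eq_zero fun i _ => by simp [show j ≠ i by omega]

theorem exists_dvd_sub_digitPoly (hm : 0 < m) {M : ℤ[X]} (hM : M.natDegree < n) :
    ∃ f : Fin n → Fin m, (m : ℤ[X]) ∣ M - digitPoly f := by
  have hm' : (0 : ℤ) < m := by exact_mod_cast hm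
  have hlt (a : ℤ) : (a % m).toNat < m := by have := Int.emod_lt_of_pos a hm'; omega
  refine ⟨fun i => ⟨(M.coeff i % m).toNat, hlt _⟩, ?_⟩
  rw [← map_natCast C, C_dvd_iff_dvd_coeff]
  intro j
  rw [coeff_sub, coeff_digitPoly]
  split_ifs with hj
  · rw [Int.toNat_of_nonneg (Int.emod_nonneg _ hm'.ne')]
    exact Int.dvd_self_sub_emod
  · simp [coeff_eq_zero_of_natDegree_lt (hM.trans_le (not_lt.mp hj))]

/-- The polynomial `P₀` above is `digitProduct (d + 1) 2`. -/
noncomputable def digitProduct (n m : ℕ) : ℤ[X][X] :=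
  ∏ f : Fin n → Fin m, (X - C (digitPoly f))

theorem monic_digitProduct (n m : ℕ) : (digitProduct n m).Monic :=
  monic_prod_of_monic _ _ fun _ _ => monic_X_sub_C _

theorem natDegree_digitProduct (n m : ℕ) : (digitProduct n m).natDegree = m ^ n := by
  rw [digitProduct, natDegree_prod_of_monic _ _ fun _ _ => monic_X_sub_C _]
  simp

theorem coeff_zero_digitProduct (hm : 0 < m) : (digitProduct n m).coeff 0 = 0 := by
  rw [← X_dvd_iff]
  let z : Fin n → Fin m := fun _ => ⟨0, hm⟩
  have hz : digitPoly z = 0 := by simp [z, digitPoly]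
  have := Finset.dvd_prod_of_mem (fun f => X - C (digitPoly f)) (Finset.mem_univ z)
  rwa [hz, C_0, sub_zero] at this

theorem dvd_eval_digitProduct (hm : 0 < m) {M : ℤ[X]} (hM : M.natDegree < n) :
    (m : ℤ[X]) ∣ (digitProduct n m).eval M := by
  obtain ⟨f, hf⟩ := exists_dvd_sub_digitPoly hm hM
  rw [digitProduct, eval_prod]
  have := Finset.dvd_prod_of_mem (fun g => M - digitPoly g) (Finset.mem_univ f)
  exact hf.trans (by simpa using this)

end DigitPolynomials

theorem stmt_12 (d : ℕ) :
    ∃ P : Polynomial (Polynomial ℤ), Irreducible P ∧ P.natDegree = 2 ^ (d + 1) ∧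
      ∀ M : Polynomial ℤ, M.natDegree ≤ d → (2 : Polynomial ℤ) ∣ P.eval M := by
  have hdeg : (digitProduct (d + 1) 2).natDegree = 2 ^ (d + 1) := natDegree_digitProduct _ _
  have hpos : 0 < (digitProduct (d + 1) 2).natDegree := hdeg ▸ by positivity
  have h3 : Prime (3 : ℤ[X]) := by
    rw [← map_ofNat C 3, prime_C_iff]
    exact Int.prime_three
  have h9 : ¬ (3 : ℤ[X]) ^ 2 ∣ 6 := by
    intro h
    have := map_dvd (evalRingHom 0) h
    norm_num at this
  refine ⟨eisensteinTwist 3 6 (digitProduct (d + 1) 2), ?_, ?_, fun M hM => ?_⟩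
  · exact irreducible_eisensteinTwist h3 (monic_digitProduct _ _) hpos
      (coeff_zero_digitProduct two_pos) ⟨2, by norm_num⟩ h9
  · rw [natDegree_eisensteinTwist (monic_digitProduct _ _) hpos, hdeg]
  · exact dvd_eval_eisensteinTwist ⟨1, by norm_num⟩ ⟨3, by norm_num⟩
      (by exact_mod_cast dvd_eval_digitProduct two_pos (Nat.lt_succ_of_le hM))
end

section
/- Let P = a_0 + a_1 T + ⋯ + a_r T^r ∈ ℤ[T] (a_r ≠ 0) be irreducible over ℚ with no fixed prime divisor, i.e., for every prime p there exists t ∈ ℤ with p ∤ P(t). Fix d ≥ 2 and let S be the finite set of primes p such that p | a_r or p ≤ rd. Choose θ ∈ ℤ with p ∤ P(θ) for all p ∈ S, and set N = ∏_{p∈S} p. Then for any monic R(T) ∈ ℤ[T] of degree d, the polynomial g(T) = P(θ + N·R(T)) has no fixed prime divisor w.r.t. T: for every prime p there exists t ∈ ℤ with p ∤ g(t). -/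
theorem stmt_13 (P : Polynomial ℤ) (hP0 : P ≠ 0)
    (hPirr : Irreducible (P.map (Int.castRingHom ℚ)))
    (hnofix : ∀ p : ℕ, p.Prime → ∃ t : ℤ, ¬ (p : ℤ) ∣ P.eval t)
    (d : ℕ) (hd : 2 ≤ d)
    (S : Finset ℕ)
    (hS : ∀ p : ℕ, p ∈ S ↔ p.Prime ∧ ((p : ℤ) ∣ P.leadingCoeff ∨ p ≤ P.natDegree * d))
    (θ : ℤ) (hθ : ∀ p ∈ S, ¬ (p : ℤ) ∣ P.eval θ)
    (R : Polynomial ℤ) (hR : R.Monic) (hRd : R.natDegree = d) :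
    ∀ q : ℕ, q.Prime → ∃ t : ℤ,
      ¬ (q : ℤ) ∣ P.eval (θ + (∏ p ∈ S, (p : ℤ)) * R.eval t) := by
  intro q hq
  haveI : Fact q.Prime := ⟨hq⟩
  set N : ℤ := ∏ p ∈ S, (p : ℤ) with hN
  by_cases hqS : q ∈ S
  · refine ⟨0, fun hdvd => hθ q hqS ?_⟩
    have h1 : (q : ℤ) ∣ (θ + N * R.eval 0) - θ := by
      have : (q : ℤ) ∣ N := by
        rw [hN]
        exact Finset.dvd_prod_of_mem (fun p : ℕ => (p : ℤ)) hqS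
      simpa using this.mul_right (R.eval 0)
    have h2 := h1.trans (Polynomial.sub_dvd_eval_sub (θ + N * R.eval 0) θ P)
    simpa using hdvd.sub h2
  · have hqfacts : ¬ ((q : ℤ) ∣ P.leadingCoeff) ∧ P.natDegree * d < q := by
      have := (hS q).not.mp hqS
      push_neg at this
      exact this hq
    obtain ⟨hlc, hqgt⟩ := hqfacts
    set φ := Int.castRingHom (ZMod q) with hφ
    have hNq : ((N : ℤ) : ZMod q) ≠ 0 := by
      rw [Ne, ZMod.intCast_zmod_eq_zero_iff_dvd]
      intro hdvd
      rw [hN] at hdvd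
      obtain ⟨p, hpS, hpd⟩ := (Nat.prime_iff_prime_int.mp hq).exists_mem_finset_dvd hdvd
      have hqp : q ∣ p := Int.ofNat_dvd.mp hpd
      have hpprime := ((hS p).mp hpS).1
      exact hqS (((Nat.prime_dvd_prime_iff_eq hq hpprime).mp hqp) ▸ hpS)
    have hlcq : ((P.leadingCoeff : ℤ) : ZMod q) ≠ 0 := by
      rwa [Ne, ZMod.intCast_zmod_eq_zero_iff_dvd]
    set Rq : Polynomial (ZMod q) := R.map φ with hRq
    set A : Polynomial (ZMod q) :=
      Polynomial.C ((θ : ℤ) : ZMod q) + Polynomial.C ((N : ℤ) : ZMod q) * Rq with hA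
    have hRqdeg : Rq.natDegree = d := by rw [hRq, hR.natDegree_map φ, hRd]
    have hAdeg : A.natDegree = d := by
      rw [hA, Polynomial.natDegree_add_eq_right_of_natDegree_lt, Polynomial.natDegree_C_mul hNq, hRqdeg]
      rw [Polynomial.natDegree_C_mul hNq, hRqdeg, Polynomial.natDegree_C]
      omega
    have hPq0 : P.map φ ≠ 0 := fun h => by
      have := Polynomial.leadingCoeff_map_of_leadingCoeff_ne_zero φ hlcq
      rw [h] at this
      simp at this
      exact hlcq this.symm
    have hF0 : (P.map φ).comp A ≠ 0 := by
      rw [Ne, Polynomial.comp_eq_zero_iff]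
      rintro (h | ⟨-, hAc⟩)
      · exact hPq0 h
      · have : A.natDegree = 0 := by rw [hAc, Polynomial.natDegree_C]
        omega
    have hFdeg : ((P.map φ).comp A).natDegree < q := by
      have h1 : ((P.map φ).comp A).natDegree ≤ (P.map φ).natDegree * A.natDegree :=
        Polynomial.natDegree_comp_le
      have h2 : (P.map φ).natDegree ≤ P.natDegree := Polynomial.natDegree_map_le
      have := Nat.mul_le_mul h2 (le_of_eq hAdeg)
      omega
    obtain ⟨x, hx⟩ := ((P.map φ).comp A).exists_eval_ne_zero_of_natDegree_lt_card hF0 (by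
      rw [Cardinal.mk_fintype, ZMod.card]
      exact_mod_cast hFdeg)
    have hcast : ((x.val : ℤ) : ZMod q) = x := by
      push_cast
      simp [ZMod.natCast_val, ZMod.cast_id]
    have key : ∀ t : ℤ, ((P.map φ).comp A).eval ((t : ℤ) : ZMod q)
        = ((P.eval (θ + N * R.eval t) : ℤ) : ZMod q) := by
      intro t
      rw [Polynomial.eval_comp, hA]
      simp only [Polynomial.eval_add, Polynomial.eval_mul, Polynomial.eval_C, hRq,
        Polynomial.eval_intCast_map]
      simp only [Int.cast_id]
      rw [show ((θ : ZMod q) + (N : ZMod q) * φ (R.eval t))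
            = (((θ + N * R.eval t : ℤ) : ZMod q)) by push_cast; rfl]
      rw [Polynomial.eval_intCast_map]
      rfl
    refine ⟨(x.val : ℤ), fun hdvd => hx ?_⟩
    rw [← hcast, key, ZMod.intCast_zmod_eq_zero_iff_dvd]
    exact hdvd
end
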